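/- arXiv:quant-ph/0009038 — 5 statements merged into one kernel-verified Lean document; each statement's English description precedes it below -/
import Mathlib

section
/- An ortholattice L satisfies, for all a, b, c ∈ L, the inequality (a ≡ b) ⊓ (b ≡ c) ≤ (a ≡ c) if and only if L is orthomodular. -/
/-!
Orthomodularity is equivalent to: `a ≤ b` and `aᶜ ⊓ b = ⊥` force `a = b`. Transitivity applied to
`b, a, ⊥` gives `(a ⊔ bᶜ) ⊓ aᶜ ≤ bᶜ`, and `a ⊔ bᶜ = (aᶜ ⊓ b)ᶜ = ⊤`, so `b ≤ a`.

Conversely, in an orthomodular lattice an element `z` with Sasaki projection `b ⊓ (bᶜ ⊔ z) ≤ z`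
splits as `(z ⊓ b) ⊔ (z ⊓ bᶜ)`. The Sasaki projections of `a ≡ b` onto `b` and `bᶜ` are `a ⊓ b` and
`aᶜ ⊓ bᶜ`, so `d = (a ≡ b) ⊓ (b ≡ c)` splits this way, with `d ⊓ b ≤ a ⊓ c` and
`d ⊓ bᶜ ≤ aᶜ ⊓ cᶜ`.
-/

/-- An ortholattice: a bounded lattice with an orthocomplementation. -/
class Ortholattice (α : Type*) extends Lattice α, BoundedOrder α, Compl α where
  compl_compl : ∀ x : α, xᶜᶜ = x
  compl_antitone : ∀ x y : α, x ≤ y → yᶜ ≤ xᶜ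
  inf_compl : ∀ x : α, x ⊓ xᶜ = ⊥
  sup_compl : ∀ x : α, x ⊔ xᶜ = ⊤

/-- The identity operation `a ≡ b = (a ⊓ b) ⊔ (aᶜ ⊓ bᶜ)`. -/
def olEquiv {α : Type*} [Ortholattice α] (a b : α) : α := (a ⊓ b) ⊔ (aᶜ ⊓ bᶜ)

namespace Ortholattice

variable {α : Type*} [Ortholattice α] {a b c x y z : α}

theorem compl_le_compl_iff : yᶜ ≤ xᶜ ↔ x ≤ y := by
  refine ⟨fun h => ?_, compl_antitone x y⟩
  simpa only [compl_compl] using compl_antitone _ _ h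

theorem le_compl_comm : x ≤ yᶜ ↔ y ≤ xᶜ := by
  rw [← compl_le_compl_iff, compl_compl]

theorem compl_injective : Function.Injective (compl : α → α) :=
  fun x y h => by rw [← compl_compl x, h, compl_compl]

theorem compl_sup : (x ⊔ y)ᶜ = xᶜ ⊓ yᶜ := by
  refine le_antisymm
    (le_inf (compl_antitone _ _ le_sup_left) (compl_antitone _ _ le_sup_right)) ?_
  rw [le_compl_comm]
  exact sup_le (le_compl_comm.1 inf_le_left) (le_compl_comm.1 inf_le_right)

theorem compl_inf : (x ⊓ y)ᶜ = xᶜ ⊔ yᶜ :=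
  compl_injective (by rw [compl_sup, compl_compl, compl_compl, compl_compl])

theorem compl_bot : (⊥ : α)ᶜ = ⊤ := by
  simpa only [bot_sup_eq] using sup_compl (⊥ : α)

theorem olEquiv_comm (a b : α) : olEquiv a b = olEquiv b a := by
  simp only [olEquiv, inf_comm]

theorem olEquiv_bot (a : α) : olEquiv a ⊥ = aᶜ := by
  simp only [olEquiv, compl_bot, inf_bot_eq, inf_top_eq, bot_sup_eq]

theorem olEquiv_of_le (h : a ≤ b) : olEquiv b a = a ⊔ bᶜ := by
  rw [olEquiv, inf_eq_right.2 h, inf_eq_left.2 (compl_antitone _ _ h)]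

def sasaki (b z : α) : α := b ⊓ (bᶜ ⊔ z)

theorem inf_le_sasaki (b z : α) : z ⊓ b ≤ sasaki b z :=
  le_inf inf_le_right (inf_le_left.trans le_sup_right)

theorem sasaki_mono (b : α) (h : y ≤ z) : sasaki b y ≤ sasaki b z :=
  inf_le_inf_left b (sup_le_sup_left h _)

variable (α) in
def Orthomodular : Prop := ∀ a b : α, a ≤ b → a ⊔ (aᶜ ⊓ b) = b

theorem orthomodular_iff_eq_of_compl_inf_eq_bot :
    Orthomodular α ↔ ∀ a b : α, a ≤ b → aᶜ ⊓ b = ⊥ → a = b := by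
  refine ⟨fun h a b hab hbot => by simpa only [hbot, sup_bot_eq] using h a b hab,
    fun h a b hab => h _ _ (sup_le hab inf_le_right) ?_⟩
  have : (a ⊔ (aᶜ ⊓ b))ᶜ ⊓ b ≤ (aᶜ ⊓ b) ⊓ (aᶜ ⊓ b)ᶜ := by
    rw [compl_sup]
    exact le_inf (inf_le_inf_right b inf_le_left) (inf_le_left.trans inf_le_right)
  exact le_bot_iff.1 (inf_compl (aᶜ ⊓ b) ▸ this)

theorem orthomodular_of_olEquiv_trans
    (H : ∀ a b c : α, olEquiv a b ⊓ olEquiv b c ≤ olEquiv a c) : Orthomodular α := by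
  refine orthomodular_iff_eq_of_compl_inf_eq_bot.2 fun a b hab hbot => le_antisymm hab ?_
  have htop : a ⊔ bᶜ = ⊤ := by
    rw [← compl_compl a, ← compl_inf, hbot, compl_bot]
  have := H b a ⊥
  rwa [olEquiv_of_le hab, olEquiv_bot, olEquiv_bot, htop, top_inf_eq, compl_le_compl_iff] at this

namespace Orthomodular

variable (h : Orthomodular α)
include h

theorem inf_compl_sup (hyx : y ≤ x) : x ⊓ (xᶜ ⊔ y) = y :=
  compl_injective (by
    simpa only [compl_inf, compl_sup, compl_compl] using h _ _ (compl_antitone _ _ hyx))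

theorem sasaki_sup (hx : x ≤ b) (hy : y ≤ bᶜ) : sasaki b (x ⊔ y) = x := by
  rw [sasaki, sup_left_comm, sup_eq_left.2 hy, sup_comm, h.inf_compl_sup hx]

theorem eq_inf_sup_inf_compl (hz : sasaki b z ≤ z) : z = (z ⊓ b) ⊔ (z ⊓ bᶜ) := by
  have hz_le : z ≤ bᶜ ⊔ z ⊓ b := by
    calc z ≤ bᶜ ⊔ z := le_sup_right
      _ = bᶜ ⊔ sasaki b z := by
        simpa only [sasaki, compl_compl] using (h bᶜ (bᶜ ⊔ z) le_sup_left).symm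
      _ ≤ bᶜ ⊔ z ⊓ b := sup_le_sup_left (le_inf hz inf_le_left) _
  have hbc : (z ⊓ b)ᶜ ⊓ (bᶜ ⊔ z ⊓ b) = bᶜ := by
    rw [sup_comm]
    simpa only [compl_compl] using h.inf_compl_sup (compl_antitone _ _ (inf_le_right (a := z)))
  refine (orthomodular_iff_eq_of_compl_inf_eq_bot.1 h _ _
    (sup_le inf_le_left inf_le_left) (le_bot_iff.1 ?_)).symm
  set m := z ⊓ b ⊔ z ⊓ bᶜ
  have hb : mᶜ ⊓ z ≤ bᶜ :=
    hbc ▸ le_inf (inf_le_left.trans (compl_antitone _ _ le_sup_left)) (inf_le_right.trans hz_le)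
  calc mᶜ ⊓ z ≤ m ⊓ mᶜ := le_inf ((le_inf inf_le_right hb).trans le_sup_right) inf_le_left
    _ = ⊥ := inf_compl m

theorem sasaki_olEquiv : sasaki b (olEquiv a b) = a ⊓ b :=
  h.sasaki_sup inf_le_right inf_le_right

theorem sasaki_compl_olEquiv : sasaki bᶜ (olEquiv a b) = aᶜ ⊓ bᶜ := by
  rw [olEquiv, sup_comm]
  exact h.sasaki_sup inf_le_right ((compl_compl b).symm ▸ inf_le_right)

theorem olEquiv_trans (a b c : α) : olEquiv a b ⊓ olEquiv b c ≤ olEquiv a c := by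
  rw [olEquiv_comm b c]
  set d := olEquiv a b ⊓ olEquiv c b
  have hpos : sasaki b d ≤ (a ⊓ b) ⊓ (c ⊓ b) :=
    le_inf (h.sasaki_olEquiv ▸ sasaki_mono b inf_le_left)
      (h.sasaki_olEquiv ▸ sasaki_mono b inf_le_right)
  have hneg : sasaki bᶜ d ≤ (aᶜ ⊓ bᶜ) ⊓ (cᶜ ⊓ bᶜ) :=
    le_inf (h.sasaki_compl_olEquiv ▸ sasaki_mono bᶜ inf_le_left)
      (h.sasaki_compl_olEquiv ▸ sasaki_mono bᶜ inf_le_right)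
  calc d = (d ⊓ b) ⊔ (d ⊓ bᶜ) :=
        h.eq_inf_sup_inf_compl (hpos.trans (inf_le_inf le_sup_left le_sup_left))
    _ ≤ sasaki b d ⊔ sasaki bᶜ d := sup_le_sup (inf_le_sasaki b d) (inf_le_sasaki bᶜ d)
    _ ≤ olEquiv a c := sup_le_sup (hpos.trans (inf_le_inf inf_le_left inf_le_left))
        (hneg.trans (inf_le_inf inf_le_left inf_le_left))

end Orthomodular

end Ortholattice

/-- An ortholattice satisfies `(a ≡ b) ⊓ (b ≡ c) ≤ (a ≡ c)` for all `a b c`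
iff it is orthomodular. -/
theorem stmt_0 (α : Type*) [Ortholattice α] :
    (∀ a b c : α, olEquiv a b ⊓ olEquiv b c ≤ olEquiv a c) ↔
      (∀ a b : α, a ≤ b → a ⊔ (aᶜ ⊓ b) = b) :=
  ⟨Ortholattice.orthomodular_of_olEquiv_trans, Ortholattice.Orthomodular.olEquiv_trans⟩
end

section
/- Let L be an ortholattice admitting a strong set of states, i.e., a nonempty set S of states such that for all a, b ∈ L, if m a = 1 implies m b = 1 for every m ∈ S, then a ≤ b. Then for every n ≥ 3 Godowski's equation n-Go holds in L: for all a₁, …, aₙ ∈ L (indices taken modulo n), (a₁ →₁ a₂) ⊓ (a₂ →₁ a₃) ⊓ … ⊓ (aₙ₋₁ →₁ aₙ) ⊓ (aₙ →₁ a₁) = (aₙ →₁ aₙ₋₁) ⊓ … ⊓ (a₂ →₁ a₁) ⊓ (a₁ →₁ aₙ). -/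
/-- A state on an ortholattice: a `[0,1]`-valued function with `m ⊤ = 1` that is
additive on orthogonal pairs. -/
structure IsState {α : Type*} [Ortholattice α] (m : α → ℝ) : Prop where
  nonneg : ∀ a, 0 ≤ m a
  le_one : ∀ a, m a ≤ 1
  map_top : m ⊤ = 1
  additive : ∀ a b, a ≤ bᶜ → m (a ⊔ b) = m a + m b

/-- The Sasaki implication `a →₁ b = aᶜ ⊔ (a ⊓ b)`. -/
def olImp1 {α : Type*} [Ortholattice α] (a b : α) : α := aᶜ ⊔ (a ⊓ b)

/-!
Let `m` be a state with `m (aᵢ →₁ aᵢ₊₁) = 1` for all `i`. Since `aᶜ` and `a ⊓ b` are orthogonal,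
`m (a →₁ b) = 1 - m a + m (a ⊓ b)`, so `m aᵢ = m (aᵢ ⊓ aᵢ₊₁) ≤ m aᵢ₊₁`. Around a cycle these
inequalities must all be equalities, hence `m (aᵢ₊₁ ⊓ aᵢ) = m aᵢ₊₁` and `m (aᵢ₊₁ →₁ aᵢ) = 1`.
A strong set of states turns this implication between "probability one" events into the
inequality `⨅ (aᵢ →₁ aᵢ₊₁) ≤ ⨅ (aᵢ₊₁ →₁ aᵢ)`, and the reverse one follows by reversing the cycle.
Nothing here uses the length of the cycle: any permutation of a finite index set will do.
-/

theorem Equiv.Perm.eq_comp_of_le_comp {ι M : Type*} [Fintype ι] [AddCommMonoid M]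
    [PartialOrder M] [IsOrderedCancelAddMonoid M] (σ : Equiv.Perm ι) {g : ι → M}
    (h : g ≤ g ∘ σ) : g = g ∘ σ := by
  funext i
  exact (Finset.sum_eq_sum_iff_of_le fun i _ => h i).1 (Equiv.sum_comp σ g).symm i (Finset.mem_univ i)

namespace IsState

variable {α : Type*} [Ortholattice α] {m : α → ℝ}

theorem map_compl (hm : IsState m) (a : α) : m aᶜ = 1 - m a := by
  have h := hm.additive a aᶜ (Ortholattice.compl_compl a).ge
  rw [Ortholattice.sup_compl, hm.map_top] at h
  linarith

theorem monotone (hm : IsState m) : Monotone m := by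
  intro a b hab
  have h := hm.additive a bᶜ (by rwa [Ortholattice.compl_compl])
  rw [hm.map_compl] at h
  linarith [hm.le_one (a ⊔ bᶜ)]

theorem map_eq_one_of_le (hm : IsState m) {a b : α} (hab : a ≤ b) (ha : m a = 1) : m b = 1 :=
  le_antisymm (hm.le_one b) (ha ▸ hm.monotone hab)

theorem map_olImp1 (hm : IsState m) (a b : α) : m (olImp1 a b) = 1 - m a + m (a ⊓ b) := by
  rw [olImp1, hm.additive _ _ (Ortholattice.compl_antitone _ _ inf_le_left), hm.map_compl]

theorem map_olImp1_eq_one_iff (hm : IsState m) (a b : α) :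
    m (olImp1 a b) = 1 ↔ m (a ⊓ b) = m a := by
  rw [hm.map_olImp1]
  constructor <;> intro h <;> linarith

theorem map_olImp1_symm_eq_one_of_perm {ι : Type*} [Fintype ι] (hm : IsState m)
    (σ : Equiv.Perm ι) (a : ι → α) (h : ∀ i, m (olImp1 (a i) (a (σ i))) = 1) (j : ι) :
    m (olImp1 (a (σ j)) (a j)) = 1 := by
  have hinf : ∀ i, m (a i ⊓ a (σ i)) = m (a i) := fun i => (hm.map_olImp1_eq_one_iff _ _).1 (h i)
  have hconst : m ∘ a = m ∘ a ∘ σ :=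
    σ.eq_comp_of_le_comp fun i => (hinf i).ge.trans (hm.monotone inf_le_right)
  rw [hm.map_olImp1_eq_one_iff, inf_comm, hinf j]
  exact congrFun hconst j

theorem map_olImp1_eq_one_of_perm {ι : Type*} [Fintype ι] (hm : IsState m)
    (σ : Equiv.Perm ι) (a : ι → α) (h : ∀ i, m (olImp1 (a (σ i)) (a i)) = 1) (j : ι) :
    m (olImp1 (a j) (a (σ j))) = 1 := by
  have h' : ∀ i, m (olImp1 (a i) (a (σ⁻¹ i))) = 1 := fun i => by
    simpa using h (σ⁻¹ i)
  simpa using hm.map_olImp1_symm_eq_one_of_perm σ⁻¹ a h' (σ j)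

end IsState

theorem inf_olImp1_perm_eq {α ι : Type*} [Ortholattice α] [Fintype ι] {S : Set (α → ℝ)}
    (hstate : ∀ m ∈ S, IsState m)
    (hstrong : ∀ a b : α, (∀ m ∈ S, m a = 1 → m b = 1) → a ≤ b)
    (σ : Equiv.Perm ι) (a : ι → α) :
    (Finset.univ.inf fun i => olImp1 (a i) (a (σ i))) =
      Finset.univ.inf fun i => olImp1 (a (σ i)) (a i) := by
  apply le_antisymm <;> refine Finset.le_inf fun j _ => hstrong _ _ fun m hm h => ?_ <;>
    have hterm := fun i => (hstate m hm).map_eq_one_of_le (Finset.inf_le (Finset.mem_univ i)) h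
  · exact (hstate m hm).map_olImp1_symm_eq_one_of_perm σ a hterm j
  · exact (hstate m hm).map_olImp1_eq_one_of_perm σ a hterm j

theorem stmt_5_general (α : Type*) [Ortholattice α] (S : Set (α → ℝ))
    (hstate : ∀ m ∈ S, IsState m)
    (hstrong : ∀ a b : α, (∀ m ∈ S, m a = 1 → m b = 1) → a ≤ b) :
    ∀ (m : ℕ) (a : Fin (m + 3) → α),
      (Finset.univ.inf fun i => olImp1 (a i) (a (i + 1))) =
        (Finset.univ.inf fun i => olImp1 (a (i + 1)) (a i)) :=
  fun _ a => inf_olImp1_perm_eq hstate hstrong (Equiv.addRight 1) a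

/-- In an ortholattice admitting a strong set of states, Godowski'\''s equations n-Go
hold for every n ≥ 3 (here n = m + 3, indices cyclic modulo n). -/
theorem stmt_5 (α : Type*) [Ortholattice α] (S : Set (α → ℝ)) (hne : S.Nonempty)
    (hstate : ∀ m ∈ S, IsState m)
    (hstrong : ∀ a b : α, (∀ m ∈ S, m a = 1 → m b = 1) → a ≤ b) :
    ∀ (m : ℕ) (a : Fin (m + 3) → α),
      (Finset.univ.inf fun i => olImp1 (a i) (a (i + 1))) =
        (Finset.univ.inf fun i => olImp1 (a (i + 1)) (a i)) :=
  stmt_5_general α S hstate hstrong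
end

section
/- Let H be a complex Hilbert space (a complete inner product space over ℂ) and let A and B be closed subspaces of H with ¬(A ≤ B). Then there exists a unit vector u ∈ A such that ‖P_B u‖ < 1, where P_B denotes the orthogonal projection onto B. Consequently the state m(C) := ‖P_C u‖² on the lattice of closed subspaces satisfies m(A) = 1 and m(B) < 1, so the lattice of closed subspaces of H admits a strong set of states. -/
namespace Submodule

variable {𝕜 E : Type*} [RCLike 𝕜]

theorem exists_norm_eq_one_mem_notMem_of_not_le [NormedAddCommGroup E] [NormedSpace 𝕜 E]
    {A B : Submodule 𝕜 E} (hAB : ¬ A ≤ B) : ∃ u ∈ A, u ∉ B ∧ ‖u‖ = 1 := by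
  obtain ⟨x, hxA, hxB⟩ := SetLike.not_le_iff_exists.mp hAB
  have hx : x ≠ 0 := by rintro rfl; exact hxB B.zero_mem
  have hnx : (‖x‖ : 𝕜) ≠ 0 := by exact_mod_cast norm_ne_zero_iff.mpr hx
  refine ⟨(‖x‖⁻¹ : 𝕜) • x, A.smul_mem _ hxA, ?_, norm_smul_inv_norm hx⟩
  rwa [B.smul_mem_iff (inv_ne_zero hnx)]

theorem norm_starProjection_lt_of_notMem [NormedAddCommGroup E] [InnerProductSpace 𝕜 E]
    (K : Submodule 𝕜 E) [K.HasOrthogonalProjection] {v : E} (hv : v ∉ K) :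
    ‖K.starProjection v‖ < ‖v‖ :=
  (K.norm_starProjection_apply_le v).lt_of_ne (mt (K.mem_iff_norm_starProjection v).mpr hv)

end Submodule

/-- If `A` and `B` are closed subspaces of a complex Hilbert space with `¬ A ≤ B`, then
there is a unit vector `u ∈ A` whose orthogonal projection onto `B` has norm `< 1`;
consequently the state `m C := ‖P_C u‖²` satisfies `m A = 1` and `m B < 1`, so the
lattice of closed subspaces admits a strong set of states. -/
theorem stmt_6 {H : Type*} [NormedAddCommGroup H] [InnerProductSpace ℂ H] [CompleteSpace H]
    (A B : Submodule ℂ H) (hA : IsClosed (A : Set H)) (hB : IsClosed (B : Set H))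
    (hAB : ¬ A ≤ B) :
    haveI : CompleteSpace A := hA.completeSpace_coe
    haveI : CompleteSpace B := hB.completeSpace_coe
    ∃ u : H, u ∈ A ∧ ‖u‖ = 1 ∧ ‖(Submodule.orthogonalProjectionOnto B u : H)‖ < 1 ∧
      ‖(Submodule.orthogonalProjectionOnto A u : H)‖ ^ 2 = 1 ∧ ‖(Submodule.orthogonalProjectionOnto B u : H)‖ ^ 2 < 1 := by
  have : CompleteSpace A := hA.completeSpace_coe
  have : CompleteSpace B := hB.completeSpace_coe
  obtain ⟨u, huA, huB, hu⟩ := Submodule.exists_norm_eq_one_mem_notMem_of_not_le hAB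
  have hPB : ‖B.starProjection u‖ < 1 := hu ▸ B.norm_starProjection_lt_of_notMem huB
  have hPA : ‖A.starProjection u‖ = 1 := hu ▸ A.norm_starProjection_apply huA
  refine ⟨u, huA, hu, hPB, by simp [hPA], ?_⟩
  exact pow_lt_one₀ (norm_nonneg _) hPB two_ne_zero
end

section
/- (a) Let L be an orthomodular ortholattice satisfying the 3OA law: for all a, b, c ∈ L, (a →₁ c) ⊓ (a ≡c b) ≤ b →₁ c. Then for all a, b, c ∈ L: a ≡c b = ⊤ if and only if a →₁ c = b →₁ c. (b) Let L be an orthomodular ortholattice satisfying the 4OA law: for all a, b, c, d ∈ L, (a →₁ d) ⊓ (a ≡(c,d) b) ≤ b →₁ d. Then for all a, b, c, d ∈ L: a ≡(c,d) b = ⊤ if and only if a →₁ d = b →₁ d. -/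
/-- The 3-variable orthoarguesian identity
`a ≡c b = ((a →₁ c) ⊓ (b →₁ c)) ⊔ ((aᶜ →₁ c) ⊓ (bᶜ →₁ c))`. -/
def oa3 {α : Type*} [Ortholattice α] (c a b : α) : α :=
  (olImp1 a c ⊓ olImp1 b c) ⊔ (olImp1 aᶜ c ⊓ olImp1 bᶜ c)

/-- The 4-variable orthoarguesian identity
`a ≡(c,d) b = (a ≡d b) ⊔ ((a ≡d c) ⊓ (b ≡d c))`. -/
def oa4 {α : Type*} [Ortholattice α] (c d a b : α) : α :=
  oa3 d a b ⊔ (oa3 d a c ⊓ oa3 d b c)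

/-! Both laws are Horn-type inequalities `(a →₁ c) ⊓ E(a, b) ≤ b →₁ c` for an expression `E`
symmetric in `a` and `b`. If `E(a, b) = ⊤`, the law and its instance with `a`, `b` swapped give
the two inequalities between `a →₁ c` and `b →₁ c`. Conversely, if `a →₁ c = b →₁ c = i`, then
`a ≡c b ≥ i ⊔ iᶜ = ⊤`, because `aᶜ ≤ i` gives `iᶜ ≤ aᶜᶜ ≤ aᶜ →₁ c`, and likewise for `b`;
since `a ≡c b ≤ a ≡(c,d) b`, the same holds for the 4-variable identity. -/

lemma eq_top_iff_eq_of_inf_le {ι α : Type*} [Lattice α] [OrderTop α] {f : ι → α}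
    {e : ι → ι → α} (e_comm : ∀ a b, e a b = e b a) (law : ∀ a b, f a ⊓ e a b ≤ f b)
    (eq_top : ∀ a b, f a = f b → e a b = ⊤) (a b : ι) : e a b = ⊤ ↔ f a = f b := by
  refine ⟨fun h => le_antisymm ?_ ?_, eq_top a b⟩
  · simpa [h] using law a b
  · simpa [e_comm b a, h] using law b a

section Ortholattice

variable {α : Type*} [Ortholattice α]

lemma compl_olImp1_le_olImp1_compl (a c : α) : (olImp1 a c)ᶜ ≤ olImp1 aᶜ c :=
  calc (olImp1 a c)ᶜ ≤ aᶜᶜ := Ortholattice.compl_antitone _ _ le_sup_left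
    _ ≤ olImp1 aᶜ c := le_sup_left

lemma oa3_comm (c a b : α) : oa3 c a b = oa3 c b a := by
  unfold oa3
  rw [inf_comm (olImp1 a c), inf_comm (olImp1 aᶜ c)]

lemma oa4_comm (c d a b : α) : oa4 c d a b = oa4 c d b a := by
  unfold oa4
  rw [oa3_comm d a b, inf_comm (oa3 d a c)]

lemma oa3_eq_top_of_olImp1_eq {a b c : α} (h : olImp1 a c = olImp1 b c) : oa3 c a b = ⊤ := by
  refine top_le_iff.mp ?_
  calc (⊤ : α) = olImp1 a c ⊔ (olImp1 a c)ᶜ := (Ortholattice.sup_compl _).symm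
    _ ≤ oa3 c a b := sup_le_sup (le_inf le_rfl h.le)
      (le_inf (compl_olImp1_le_olImp1_compl a c) (h ▸ compl_olImp1_le_olImp1_compl b c))

lemma oa3_le_oa4 (c d a b : α) : oa3 d a b ≤ oa4 c d a b := le_sup_left

lemma oa4_eq_top_of_olImp1_eq {a b c d : α} (h : olImp1 a d = olImp1 b d) :
    oa4 c d a b = ⊤ :=
  top_le_iff.mp ((oa3_eq_top_of_olImp1_eq h).symm.le.trans (oa3_le_oa4 c d a b))

end Ortholattice

theorem stmt_18_general (α : Type*) [Ortholattice α] :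
    ((∀ a b c : α, olImp1 a c ⊓ oa3 c a b ≤ olImp1 b c) →
        ∀ a b c : α, (oa3 c a b = ⊤ ↔ olImp1 a c = olImp1 b c)) ∧
      ((∀ a b c d : α, olImp1 a d ⊓ oa4 c d a b ≤ olImp1 b d) →
        ∀ a b c d : α, (oa4 c d a b = ⊤ ↔ olImp1 a d = olImp1 b d)) := by
  constructor
  · intro law a b c
    exact eq_top_iff_eq_of_inf_le (oa3_comm c) (law · · c)
      (fun _ _ => oa3_eq_top_of_olImp1_eq) a b
  · intro law a b c d
    exact eq_top_iff_eq_of_inf_le (oa4_comm c d) (law · · c d)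
      (fun _ _ => oa4_eq_top_of_olImp1_eq) a b

/-- (a) In any orthomodular ortholattice satisfying the 3OA law,
`a ≡c b = ⊤ ↔ a →₁ c = b →₁ c`.  (b) In any orthomodular ortholattice satisfying
the 4OA law, `a ≡(c,d) b = ⊤ ↔ a →₁ d = b →₁ d`. -/
theorem stmt_18 (α : Type*) [Ortholattice α]
    (hOM : ∀ a b : α, a ≤ b → a ⊔ (aᶜ ⊓ b) = b) :
    ((∀ a b c : α, olImp1 a c ⊓ oa3 c a b ≤ olImp1 b c) →
        ∀ a b c : α, (oa3 c a b = ⊤ ↔ olImp1 a c = olImp1 b c)) ∧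
      ((∀ a b c d : α, olImp1 a d ⊓ oa4 c d a b ≤ olImp1 b d) →
        ∀ a b c d : α, (oa4 c d a b = ⊤ ↔ olImp1 a d = olImp1 b d)) :=
  stmt_18_general α
end

section
/- Let H be a complex Hilbert space and let a₀, b₀, a₁, b₁, a₂, b₂, a₃, b₃ be closed subspaces of H with aᵢ ⊥ bᵢ for i = 0, 1, 2, 3. For indices i < j in {0, 1, 2}, define Tᵢⱼ := (aᵢ ∨ aⱼ) ∩ (bᵢ ∨ bⱼ) ∩ (((aᵢ ∨ a₃) ∩ (bᵢ ∨ b₃)) ∨ ((aⱼ ∨ a₃) ∩ (bⱼ ∨ b₃))). Then the generalized (5-variable) orthoarguesian equation E₃ holds: (a₀ ∨ b₀) ∩ (a₁ ∨ b₁) ∩ (a₂ ∨ b₂) ∩ (a₃ ∨ b₃) ≤ b₀ ∨ (a₀ ∩ (a₁ ∨ (T₀₁ ∩ (T₀₂ ∨ T₁₂)))). -/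
/-!
Since `aᵢ ⊥ bᵢ` and both are closed, `aᵢ ⊔ bᵢ` is already closed, so every `x` in the
left-hand side splits as `x = uᵢ + vᵢ` with `uᵢ ∈ aᵢ`, `vᵢ ∈ bᵢ`, for each `i`. Then
`uᵢ - uⱼ = vⱼ - vᵢ` lies in `(aᵢ ∨ aⱼ) ∩ (bᵢ ∨ bⱼ)`, and writing
`uᵢ - uⱼ = (uᵢ - u₃) - (uⱼ - u₃)` puts it in `Tᵢⱼ`; likewise
`u₀ - u₁ = (u₀ - u₂) - (u₁ - u₂)` lies in `T₀₁ ∩ (T₀₂ ∨ T₁₂)`. Finally `u₀ = u₁ + (u₀ - u₁)`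
and `x = v₀ + u₀` give membership in the right-hand side.
-/

namespace Submodule

section TopologicalClosureSup

variable {R M : Type*} [Ring R] [AddCommGroup M] [Module R M] [TopologicalSpace M]
  [IsTopologicalAddGroup M] [ContinuousConstSMul R M] {K L K' L' : Submodule R M} {y z : M}

theorem add_mem_topologicalClosure_sup (hy : y ∈ K) (hz : z ∈ L) :
    y + z ∈ (K ⊔ L).topologicalClosure :=
  (K ⊔ L).le_topologicalClosure (add_mem_sup hy hz)

theorem sub_mem_topologicalClosure_sup (hy : y ∈ K) (hz : z ∈ L) :
    y - z ∈ (K ⊔ L).topologicalClosure :=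
  sub_eq_add_neg y z ▸ add_mem_topologicalClosure_sup hy (L.neg_mem hz)

theorem sub_mem_topologicalClosure_sup_inf_of_add_eq_add {y' z' : M} (hy : y ∈ K) (hy' : y' ∈ K')
    (hz : z ∈ L) (hz' : z' ∈ L') (h : y + z = y' + z') :
    y - y' ∈ (K ⊔ K').topologicalClosure ⊓ (L ⊔ L').topologicalClosure := by
  have hyz : y - y' = -(z - z') := by
    rw [neg_sub, sub_eq_sub_iff_add_eq_add, h, add_comm]
  exact ⟨sub_mem_topologicalClosure_sup hy hy',
    hyz ▸ neg_mem (sub_mem_topologicalClosure_sup hz hz')⟩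

end TopologicalClosureSup

variable {𝕜 E : Type*} [RCLike 𝕜] [NormedAddCommGroup E] [InnerProductSpace 𝕜 E]

/-- The projection onto `Mᗮ` maps `K ⊔ M` into `K`, hence by continuity also its closure. -/
theorem isClosed_sup_of_le_orthogonal {K M : Submodule 𝕜 E} [M.HasOrthogonalProjection]
    (hK : IsClosed (K : Set E)) (hKM : K ≤ Mᗮ) : IsClosed ((K ⊔ M : Submodule 𝕜 E) : Set E) := by
  refine isClosed_of_closure_subset fun x hx => ?_
  have hmaps : ∀ y ∈ K ⊔ M, Mᗮ.starProjection y ∈ K := by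
    intro y hy
    obtain ⟨k, hk, m, hm, rfl⟩ := mem_sup.mp hy
    rwa [map_add, starProjection_eq_self_iff.mpr (hKM hk),
      starProjection_orthogonal_apply_eq_zero hm, add_zero]
  have hPx : Mᗮ.starProjection x ∈ K :=
    hK.closure_subset (map_mem_closure Mᗮ.starProjection.continuous hx hmaps)
  rw [← M.starProjection_add_starProjection_orthogonal x, add_comm]
  exact add_mem_sup hPx (M.starProjection_apply_mem x)

end Submodule

open Submodule

/-- The generalized (5-variable) orthoarguesian equation E₃ holds in the lattice of
closed subspaces of a complex Hilbert space.  Here the join `K ∨ M` is the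
topological closure of the subspace sum `K ⊔ M`. -/
theorem stmt_19 {H : Type*} [NormedAddCommGroup H] [InnerProductSpace ℂ H]
    [CompleteSpace H] (a b : Fin 4 → Submodule ℂ H)
    (ha : ∀ i, IsClosed ((a i : Set H))) (hb : ∀ i, IsClosed ((b i : Set H)))
    (hperp : ∀ i, a i ≤ (b i)ᗮ) :
    let jo : Submodule ℂ H → Submodule ℂ H → Submodule ℂ H :=
      fun K M => (K ⊔ M).topologicalClosure
    let T : Fin 4 → Fin 4 → Submodule ℂ H := fun i j =>
      jo (a i) (a j) ⊓ jo (b i) (b j) ⊓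
        jo (jo (a i) (a 3) ⊓ jo (b i) (b 3)) (jo (a j) (a 3) ⊓ jo (b j) (b 3))
    jo (a 0) (b 0) ⊓ jo (a 1) (b 1) ⊓ jo (a 2) (b 2) ⊓ jo (a 3) (b 3) ≤
      jo (b 0) (a 0 ⊓ jo (a 1) (T 0 1 ⊓ jo (T 0 2) (T 1 2))) := by
  intro jo T x hx
  obtain ⟨⟨⟨h0, h1⟩, h2⟩, h3⟩ := hx
  have hsplit : ∀ i, ∃ u ∈ a i, ∃ v ∈ b i, u + v = x := fun i => by
    have := (hb i).completeSpace_coe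
    have hxi : x ∈ (a i ⊔ b i).topologicalClosure := by fin_cases i <;> assumption
    rw [(isClosed_sup_of_le_orthogonal (ha i) (hperp i)).submodule_topologicalClosure_eq] at hxi
    exact mem_sup.mp hxi
  choose u hu v hv hxuv using hsplit
  have hD : ∀ i j, u i - u j ∈ jo (a i) (a j) ⊓ jo (b i) (b j) := fun i j =>
    sub_mem_topologicalClosure_sup_inf_of_add_eq_add (hu i) (hu j) (hv i) (hv j)
      ((hxuv i).trans (hxuv j).symm)
  have hT : ∀ i j, u i - u j ∈ T i j := fun i j =>
    ⟨hD i j, sub_sub_sub_cancel_right (u i) (u j) (u 3) ▸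
      sub_mem_topologicalClosure_sup (hD i 3) (hD j 3)⟩
  have h01 : u 0 - u 1 ∈ T 0 1 ⊓ jo (T 0 2) (T 1 2) :=
    ⟨hT 0 1, sub_sub_sub_cancel_right (u 0) (u 1) (u 2) ▸
      sub_mem_topologicalClosure_sup (hT 0 2) (hT 1 2)⟩
  have hu0 : u 0 ∈ a 0 ⊓ jo (a 1) (T 0 1 ⊓ jo (T 0 2) (T 1 2)) :=
    ⟨hu 0, add_sub_cancel (u 1) (u 0) ▸ add_mem_topologicalClosure_sup (hu 1) h01⟩
  rw [← hxuv 0, add_comm]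
  exact add_mem_topologicalClosure_sup (hv 0) hu0
end
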